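/- arXiv:0907.2578 — 2 statements merged into one kernel-verified Lean document; each statement's English description precedes it below -/
import Mathlib

section
/- We have v₅(H_3 − 1) = v₅(H_21 − 1) = v₅(H_23 − 1) = 1, and for all positive integers N not in {1, 3, 21, 23}, v₅(H_N − 1) ≤ 0. -/
/-!
Split `H_m` into the terms with `p ∣ i` and the rest: `H_m = p⁻¹ H_{⌊m/p⌋} + T` with `T`
`p`-integral. Hence if `v_p(H_{⌊m/p⌋}) ≤ 0`, then `v_p(H_m - c) < 0` for every `p`-integral `c`.
For `p = 5` the only `n ≥ 1` with `v_5(H_n) > 0` are `4, 20, 24`: this is a finite computation for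
`n < 125`, and for `n ≥ 125` the quotient `⌊n/5⌋ ≥ 25` is not exceptional. The theorem follows
in the same way with `c = 1`, after a direct computation for `N < 125`.
-/

/-- The `n`-th harmonic number `H_n = ∑_{i=1}^n 1/i`, as a rational number. -/
def H (n : ℕ) : ℚ := ∑ i ∈ Finset.range n, (1 : ℚ) / (i + 1)

theorem H_eq_harmonic : H = harmonic := by
  funext n
  simp [H, harmonic, one_div]

theorem Rat.not_dvd_den_add {p : ℕ} (hp : p.Prime) {q r : ℚ} (hq : ¬ p ∣ q.den)
    (hr : ¬ p ∣ r.den) : ¬ p ∣ (q + r).den := fun h =>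
  (hp.dvd_mul.mp (h.trans (Rat.add_den_dvd q r))).elim hq hr

namespace padicValRat

theorem nonneg_of_not_dvd_den {p : ℕ} {q : ℚ} (h : ¬ p ∣ q.den) : 0 ≤ padicValRat p q := by
  rw [padicValRat_def, padicValNat.eq_zero_of_not_dvd h]
  simp

theorem nonpos_of_not_dvd_num {p : ℕ} {q : ℚ} (h : ¬ (p : ℤ) ∣ q.num) :
    padicValRat p q ≤ 0 := by
  rw [padicValRat_def, padicValInt.eq_zero_of_not_dvd h]
  simp

variable {p : ℕ} [hp : Fact p.Prime]

theorem eq_one_of_dvd_num {q : ℚ} (h : (p : ℤ) ∣ q.num) (h' : ¬ (p : ℤ) ^ 2 ∣ q.num) :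
    padicValRat p q = 1 := by
  have hnum : q.num ≠ 0 := by rintro h0; exact h' (h0 ▸ dvd_zero _)
  have hden : ¬ p ∣ q.den := fun hd =>
    hp.out.not_dvd_one (q.reduced.gcd_eq_one ▸ Nat.dvd_gcd (Int.natCast_dvd.mp h) hd)
  have hval_ge : 1 ≤ padicValInt p q.num :=
    ((padicValInt_dvd_iff 1 q.num).mp (by simpa using h)).resolve_left hnum
  have hval_lt : ¬ 2 ≤ padicValInt p q.num := fun h2 =>
    h' ((padicValInt_dvd_iff 2 q.num).mpr (Or.inr h2))
  rw [padicValRat_def, padicValNat.eq_zero_of_not_dvd hden]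
  omega

theorem add_eq_of_neg_of_not_dvd_den {x y : ℚ} (hx : padicValRat p x < 0)
    (hy : ¬ p ∣ y.den) : padicValRat p (x + y) = padicValRat p x := by
  have hy_nonneg := nonneg_of_not_dvd_den hy
  rcases eq_or_ne y 0 with rfl | hy0
  · rw [add_zero]
  have hx0 : x ≠ 0 := by rintro rfl; simp at hx
  have hxy : x + y ≠ 0 := by
    intro h
    rw [← neg_eq_of_add_eq_zero_right h, padicValRat.neg] at hy_nonneg
    omega
  exact add_eq_of_lt hxy hx0 hy0 (by omega)

end padicValRat

section harmonic

variable (p : ℕ) [hp : Fact p.Prime]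

theorem exists_harmonic_eq_inv_mul_harmonic_div_add (m : ℕ) :
    ∃ T : ℚ, ¬ p ∣ T.den ∧ harmonic m = (p : ℚ)⁻¹ * harmonic (m / p) + T := by
  induction m with
  | zero => exact ⟨0, by simpa using hp.out.one_lt.ne', by simp⟩
  | succ m ih =>
    obtain ⟨T, hT, hm⟩ := ih
    by_cases hdvd : p ∣ m + 1
    · obtain ⟨_ | k, hk⟩ := hdvd
      · simp at hk
      have hdiv_succ : (m + 1) / p = k + 1 := by rw [hk, Nat.mul_div_cancel_left _ hp.out.pos]
      have hdiv : m / p = k := Nat.div_eq_of_lt_le (by nlinarith) (by nlinarith)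
      refine ⟨T, hT, ?_⟩
      rw [harmonic_succ, hm, hdiv_succ, harmonic_succ, hdiv, hk]
      push_cast
      field_simp
      ring
    · refine ⟨T + (↑(m + 1))⁻¹, Rat.not_dvd_den_add hp.out hT ?_, ?_⟩
      · rwa [Rat.inv_natCast_den, if_neg m.succ_ne_zero]
      · rw [harmonic_succ, hm, Nat.succ_div_of_not_dvd hdvd]
        ring

variable {p}

theorem padicValRat_harmonic_sub_neg {m : ℕ} (hm : p ≤ m)
    (hv : padicValRat p (harmonic (m / p)) ≤ 0) {c : ℚ} (hc : ¬ p ∣ c.den) :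
    padicValRat p (harmonic m - c) < 0 := by
  obtain ⟨T, hT, hsplit⟩ := exists_harmonic_eq_inv_mul_harmonic_div_add p m
  have hpos : 0 < harmonic (m / p) := harmonic_pos (Nat.div_pos hm hp.out.pos).ne'
  have hlead : padicValRat p ((p : ℚ)⁻¹ * harmonic (m / p)) < 0 := by
    rw [padicValRat.mul (by simp [hp.out.ne_zero]) hpos.ne', padicValRat.inv,
      padicValRat.self hp.out.one_lt]
    omega
  have htail : ¬ p ∣ (T + -c).den := Rat.not_dvd_den_add hp.out hT (by rwa [Rat.neg_den])
  rw [hsplit, add_sub_assoc, sub_eq_add_neg,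
    padicValRat.add_eq_of_neg_of_not_dvd_den hlead htail]
  exact hlead

end harmonic

instance Nat.fact_prime_five : Fact (Nat.Prime 5) := ⟨Nat.prime_five⟩

theorem padicValRat_five_harmonic_nonpos {n : ℕ} (hn : n ∉ ({0, 4, 20, 24} : Finset ℕ)) :
    padicValRat 5 (harmonic n) ≤ 0 := by
  induction n using Nat.strong_induction_on with
  | _ n ih =>
    by_cases hsmall : n < 125
    · have hcomp : ∀ n < 125, n ∉ ({0, 4, 20, 24} : Finset ℕ) →
          ¬ (5 : ℤ) ∣ (harmonic n).num := by
        decide +kernel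
      exact padicValRat.nonpos_of_not_dvd_num (hcomp n hsmall hn)
    · have hquot : n / 5 ∉ ({0, 4, 20, 24} : Finset ℕ) := by
        simp only [Finset.mem_insert, Finset.mem_singleton]
        omega
      have hneg := padicValRat_harmonic_sub_neg (m := n) (c := 0) (by omega)
        (ih _ (by omega) hquot) (by norm_num)
      rw [sub_zero] at hneg
      exact hneg.le

theorem v5_harmonic_sub_one :
    padicValRat 5 (H 3 - 1) = 1 ∧ padicValRat 5 (H 21 - 1) = 1 ∧
      padicValRat 5 (H 23 - 1) = 1 ∧
      ∀ N : ℕ, 1 ≤ N → N ∉ ({1, 3, 21, 23} : Set ℕ) → padicValRat 5 (H N - 1) ≤ 0 := by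
  rw [H_eq_harmonic]
  refine ⟨?_, ?_, ?_, fun N hN hexc => ?_⟩
  · exact padicValRat.eq_one_of_dvd_num (by decide +kernel) (by decide +kernel)
  · exact padicValRat.eq_one_of_dvd_num (by decide +kernel) (by decide +kernel)
  · exact padicValRat.eq_one_of_dvd_num (by decide +kernel) (by decide +kernel)
  by_cases hsmall : N < 125
  · have hcomp : ∀ N < 125, N ∉ ({0, 1, 3, 21, 23} : Finset ℕ) →
        ¬ (5 : ℤ) ∣ (harmonic N - 1).num := by
      decide +kernel
    refine padicValRat.nonpos_of_not_dvd_num (hcomp N hsmall ?_)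
    simp only [Set.mem_insert_iff, Set.mem_singleton_iff] at hexc
    simp only [Finset.mem_insert, Finset.mem_singleton]
    omega
  · have hquot : N / 5 ∉ ({0, 4, 20, 24} : Finset ℕ) := by
      simp only [Finset.mem_insert, Finset.mem_singleton]
      omega
    exact (padicValRat_harmonic_sub_neg (by omega)
      (padicValRat_five_harmonic_nonpos hquot) (by norm_num)).le
end

section
/- For every prime p ≥ 5 and every positive integer J divisible by p, we have pH_J ≡ H_{J/p} modulo p³ℤ_p, i.e. v_p(pH_J − H_{J/p}) ≥ 3. -/
open Finset

theorem ZMod.sum_range_natCast {M : Type*} [AddCommMonoid M] (n : ℕ) [NeZero n]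
    (g : ZMod n → M) : ∑ i ∈ range n, g i = ∑ x : ZMod n, g x :=
  sum_nbij' (fun i => (i : ZMod n)) ZMod.val (fun _ _ => mem_univ _)
    (fun a _ => mem_range.mpr (ZMod.val_lt a)) (fun _ hi => ZMod.val_cast_of_lt (mem_range.mp hi))
    (fun a _ => ZMod.natCast_zmod_val a) fun _ _ => rfl

theorem FiniteField.sum_inv_pow_eq_zero {K : Type*} [Field K] [Fintype K] {k : ℕ}
    (hk : k < Fintype.card K - 1) : ∑ x : K, x⁻¹ ^ k = 0 :=
  (Equiv.sum_comp (Equiv.inv K) (· ^ k)).trans (FiniteField.sum_pow_lt_card_sub_one K k hk)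

theorem ZMod.sum_range_inv_pow_eq_zero {p : ℕ} [Fact p.Prime] {k : ℕ} (hk0 : k ≠ 0)
    (hk : k < p - 1) : ∑ i ∈ range (p - 1), ((i + 1 : ℕ) : ZMod p)⁻¹ ^ k = 0 := by
  have h := FiniteField.sum_inv_pow_eq_zero (K := ZMod p) (k := k) (by rwa [ZMod.card])
  obtain ⟨q, rfl⟩ : ∃ q, p = q + 1 := ⟨p - 1, by have := (Fact.out : p.Prime).pos; omega⟩
  rw [← ZMod.sum_range_natCast, sum_range_succ'] at h
  simpa [hk0] using h

section PadicReduction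

variable {p : ℕ} [Fact p.Prime]

theorem PadicInt.norm_le_inv_of_toZMod_eq_zero {x : ℤ_[p]} (hx : PadicInt.toZMod x = 0) :
    ‖x‖ ≤ (p : ℝ)⁻¹ := by
  have hlt : ‖x‖ < 1 := by
    rw [← PadicInt.mem_nonunits, ← IsLocalRing.mem_maximalIdeal, ← PadicInt.ker_toZMod]
    exact hx
  obtain ⟨y, rfl⟩ := (PadicInt.norm_lt_one_iff_dvd x).mp hlt
  rw [norm_mul, PadicInt.norm_p]
  exact mul_le_of_le_one_right (by positivity) (PadicInt.norm_le_one y)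

theorem padicNorm_sum_inv_le_of_sum_inv_eq_zero {ι : Type*} {s : Finset ι} {f : ι → ℤ}
    (hf : ∀ i ∈ s, (f i : ZMod p) ≠ 0) (hsum : ∑ i ∈ s, (f i : ZMod p)⁻¹ = 0) :
    padicNorm p (∑ i ∈ s, (f i : ℚ)⁻¹) ≤ (p : ℚ)⁻¹ := by
  have hnorm : ∀ i ∈ s, ‖(f i : ℤ_[p])‖ = 1 := fun i hi =>
    (PadicInt.norm_le_one _).antisymm <| not_lt.mp fun h => hf i hi <|
      (ZMod.intCast_zmod_eq_zero_iff_dvd _ _).mpr <| (PadicInt.norm_int_lt_one_iff_dvd _).mp h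
  have map_sum_inv : ∀ {K : Type} [Field K] (φ : ℤ_[p] →+* K),
      φ (∑ i ∈ s, (f i : ℤ_[p]).inv) = ∑ i ∈ s, (f i : K)⁻¹ := by
    intro K _ φ
    rw [map_sum]
    refine sum_congr rfl fun i hi => ?_
    rw [← map_intCast φ]
    exact eq_inv_of_mul_eq_one_right (by rw [← map_mul, PadicInt.mul_inv (hnorm i hi), map_one])
  have hx := PadicInt.norm_le_inv_of_toZMod_eq_zero ((map_sum_inv PadicInt.toZMod).trans hsum)
  rw [← Rat.cast_le (K := ℝ), ← Padic.eq_padicNorm]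
  push_cast
  rwa [← map_sum_inv PadicInt.Coe.ringHom]

theorem le_padicValRat_of_padicNorm_le {q : ℚ} (hq : q ≠ 0) {m : ℕ}
    (h : padicNorm p q ≤ ((p : ℚ) ^ m)⁻¹) : (m : ℤ) ≤ padicValRat p q := by
  rw [padicNorm.eq_zpow_of_nonzero hq, ← zpow_natCast, ← zpow_neg] at h
  exact neg_le_neg_iff.mp <|
    (zpow_le_zpow_iff_right₀ (by exact_mod_cast (Fact.out : p.Prime).one_lt)).mp h

end PadicReduction

theorem H_succ (n : ℕ) : H (n + 1) = H n + ((n + 1 : ℕ) : ℚ)⁻¹ := by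
  rw [H, sum_range_succ, H]
  push_cast
  ring

def harmonicBlock (p j : ℕ) : ℚ := ∑ i ∈ range (p - 1), ((j * p + i + 1 : ℕ) : ℚ)⁻¹

theorem H_mul_succ {p : ℕ} (hp : 0 < p) (n : ℕ) :
    H (p * (n + 1)) = H (p * n) + harmonicBlock p n + ((p * (n + 1) : ℕ) : ℚ)⁻¹ := by
  obtain ⟨q, rfl⟩ : ∃ q, p = q + 1 := ⟨p - 1, by omega⟩
  rw [show (q + 1) * (n + 1) = (q + 1) * n + q + 1 by ring, H_succ, H, H, sum_range_add,
    harmonicBlock, Nat.add_sub_cancel]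
  congr 2
  refine sum_congr rfl fun i _ => ?_
  push_cast
  ring

theorem p_mul_H_mul {p : ℕ} (hp : 0 < p) (n : ℕ) :
    p * H (p * n) = H n + p * ∑ j ∈ range n, harmonicBlock p j := by
  induction n with
  | zero => simp [H]
  | succ n ih =>
    have : (p : ℚ) ≠ 0 := by exact_mod_cast hp.ne'
    rw [H_mul_succ hp, sum_range_succ, H_succ]
    push_cast
    field_simp
    linear_combination ((n : ℚ) + 1) * ih

theorem harmonicBlock_pos {p : ℕ} (hp : 2 ≤ p) (j : ℕ) : 0 < harmonicBlock p j :=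
  sum_pos (fun _ _ => by positivity) (nonempty_range_iff.mpr (by omega))

theorem two_mul_harmonicBlock (p j : ℕ) :
    2 * harmonicBlock p j = p * (2 * j + 1) *
      ∑ i ∈ range (p - 1), (((j * p + i + 1) * ((j + 1) * p - (i + 1)) : ℤ) : ℚ)⁻¹ := by
  have hreflect : harmonicBlock p j =
      ∑ i ∈ range (p - 1), (((j + 1) * p - (i + 1) : ℤ) : ℚ)⁻¹ := by
    rw [harmonicBlock, ← sum_range_reflect]
    refine sum_congr rfl fun i hi => ?_
    have hi := mem_range.mp hi
    have hjp : (j + 1) * p = j * p + p := add_one_mul j p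
    rw [show j * p + (p - 1 - 1 - i) + 1 = (j + 1) * p - (i + 1) by omega,
      Nat.cast_sub (by omega)]
    push_cast
    rfl
  rw [two_mul]
  nth_rewrite 2 [hreflect]
  rw [harmonicBlock, ← sum_add_distrib, mul_sum]
  refine sum_congr rfl fun i hi => ?_
  have hi := mem_range.mp hi
  have ha : ((j * p + i + 1 : ℕ) : ℚ) ≠ 0 := by positivity
  have hb : (((j + 1) * p - (i + 1) : ℤ) : ℚ) ≠ 0 := by
    have : i + 1 < (j + 1) * p :=
      (show i + 1 < p by omega).trans_le (Nat.le_mul_of_pos_left p j.succ_pos)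
    push_cast
    exact sub_ne_zero.mpr (by exact_mod_cast this.ne')
  rw [inv_add_inv ha hb, div_eq_mul_inv]
  congr 1 <;> push_cast <;> ring

theorem padicNorm_harmonicBlock_le {p : ℕ} [Fact p.Prime] (hp : 5 ≤ p) (j : ℕ) :
    padicNorm p (harmonicBlock p j) ≤ ((p : ℚ) ^ 2)⁻¹ := by
  have hcast : ∀ i : ℕ, (((j * p + i + 1) * ((j + 1) * p - (i + 1)) : ℤ) : ZMod p) =
      -((i + 1 : ℕ) : ZMod p) ^ 2 := fun i => by
    push_cast [ZMod.natCast_self]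
    ring
  have hne : ∀ i ∈ range (p - 1), ((i + 1 : ℕ) : ZMod p) ≠ 0 := fun i hi => by
    rw [Ne, ZMod.natCast_eq_zero_iff]
    exact Nat.not_dvd_of_pos_of_lt i.succ_pos (by have := mem_range.mp hi; omega)
  have hT := padicNorm_sum_inv_le_of_sum_inv_eq_zero (p := p) (s := range (p - 1))
    (f := fun i => (j * p + i + 1) * ((j + 1) * p - (i + 1)))
    (fun i hi => by simpa [hcast] using hne i hi)
    (by simp only [hcast, inv_neg, ← inv_pow, sum_neg_distrib,
      ZMod.sum_range_inv_pow_eq_zero two_ne_zero (by omega : 2 < p - 1), neg_zero])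
  have h2 : padicNorm p 2 = 1 := by
    exact_mod_cast (padicNorm.nat_eq_one_iff 2).mpr (Nat.not_dvd_of_pos_of_lt two_pos (by omega))
  have h2j : padicNorm p (2 * j + 1) ≤ 1 := by exact_mod_cast padicNorm.of_nat (2 * j + 1)
  have := congrArg (padicNorm p) (two_mul_harmonicBlock p j)
  simp only [padicNorm.mul, h2, one_mul, padicNorm.padicNorm_p_of_prime] at this
  calc padicNorm p (harmonicBlock p j)
      = (p : ℚ)⁻¹ * padicNorm p (2 * j + 1) * padicNorm p _ := this
    _ ≤ (p : ℚ)⁻¹ * 1 * (p : ℚ)⁻¹ := by gcongr; exact padicNorm.nonneg _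
    _ = ((p : ℚ) ^ 2)⁻¹ := by ring

theorem p_mul_harmonic_congr_cube (p J : ℕ) (hp : p.Prime) (hp5 : 5 ≤ p)
    (hJ : 1 ≤ J) (hdvd : p ∣ J) :
    3 ≤ padicValRat p ((p : ℚ) * H J - H (J / p)) := by
  have : Fact p.Prime := ⟨hp⟩
  obtain ⟨n, rfl⟩ := hdvd
  rw [Nat.mul_div_cancel_left n hp.pos, p_mul_H_mul hp.pos, add_sub_cancel_left]
  have hn : 0 < n := Nat.pos_of_ne_zero (by rintro rfl; simp at hJ)
  have hsum_pos : 0 < ∑ j ∈ range n, harmonicBlock p j :=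
    sum_pos (fun j _ => harmonicBlock_pos (by omega) j) (nonempty_range_iff.mpr hn.ne')
  have hsum : padicNorm p (∑ j ∈ range n, harmonicBlock p j) ≤ ((p : ℚ) ^ 2)⁻¹ :=
    padicNorm.sum_le' (fun j _ => padicNorm_harmonicBlock_le hp5 j) (by positivity)
  refine le_padicValRat_of_padicNorm_le (m := 3) (by positivity) ?_
  rw [padicNorm.mul, padicNorm.padicNorm_p_of_prime, pow_succ', mul_inv]
  gcongr
end
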